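/- Let a, b ∈ ℤ with a ≠ 0 and b < 0. The quadratic form Q(x₁,x₂,x₃) = (a² − 2b)(x₁² + x₂² + x₃²) + 2b(x₁x₂ + x₁x₃ + x₂x₃) satisfies Q(x) ≥ a² − 2b for all nonzero x ∈ ℤ³ if and only if a² ≥ −b. -/

import Mathlib

/-!
Writing `c = -b ≥ 0`, the form is `Q(x) = a² ‖x‖² + c ((x₁ - x₂)² + (x₁ - x₃)² + (x₂ - x₃)²)`.
The vector `(1, 1, 1)` gives `Q = 3a²`, which forces `a² ≥ c`. Conversely, for nonzero integral `x`
either all coordinates are equal, so `Q = 3a²x₁² ≥ 3a² ≥ a² + 2c`, or at least two of the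
differences are nonzero, so `Q ≥ a² + 2c` directly.
-/

theorem quadForm_eq_sq_add_sum_sq_sub {R : Type*} [CommRing R] (a b x₁ x₂ x₃ : R) :
    (a ^ 2 - 2 * b) * (x₁ ^ 2 + x₂ ^ 2 + x₃ ^ 2) + 2 * b * (x₁ * x₂ + x₁ * x₃ + x₂ * x₃) =
      a ^ 2 * (x₁ ^ 2 + x₂ ^ 2 + x₃ ^ 2) - b * ((x₁ - x₂) ^ 2 + (x₁ - x₃) ^ 2 + (x₂ - x₃) ^ 2) := by
  ring

theorem Int.one_le_sq_of_ne_zero {x : ℤ} (hx : x ≠ 0) : 1 ≤ x ^ 2 :=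
  (one_le_sq_iff_one_le_abs x).2 (Int.one_le_abs hx)

theorem Int.one_le_sum_sq_of_ne_zero {x₁ x₂ x₃ : ℤ} (hx : ¬(x₁ = 0 ∧ x₂ = 0 ∧ x₃ = 0)) :
    1 ≤ x₁ ^ 2 + x₂ ^ 2 + x₃ ^ 2 := by
  have := sq_nonneg x₁; have := sq_nonneg x₂; have := sq_nonneg x₃
  rcases not_and_or.1 hx with h₁ | hx
  · linarith [Int.one_le_sq_of_ne_zero h₁]
  rcases not_and_or.1 hx with h₂ | h₃
  · linarith [Int.one_le_sq_of_ne_zero h₂]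
  · linarith [Int.one_le_sq_of_ne_zero h₃]

/-- If two of three integers differ, the third differs from at least one of them. -/
theorem Int.two_le_sum_sq_sub_of_not_all_eq {x₁ x₂ x₃ : ℤ} (h : ¬(x₁ = x₂ ∧ x₂ = x₃)) :
    2 ≤ (x₁ - x₂) ^ 2 + (x₁ - x₃) ^ 2 + (x₂ - x₃) ^ 2 := by
  have := sq_nonneg (x₁ - x₂); have := sq_nonneg (x₁ - x₃); have := sq_nonneg (x₂ - x₃)
  have one_le {y z : ℤ} (hyz : y ≠ z) : 1 ≤ (y - z) ^ 2 :=
    Int.one_le_sq_of_ne_zero (sub_ne_zero.2 hyz)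
  by_cases h₁₂ : x₁ = x₂
  · have h₂₃ : x₂ ≠ x₃ := fun h₂₃ ↦ h ⟨h₁₂, h₂₃⟩
    linarith [one_le h₂₃, one_le (h₁₂ ▸ h₂₃ : x₁ ≠ x₃)]
  · by_cases h₁₃ : x₁ = x₃
    · linarith [one_le h₁₂, one_le (h₁₃ ▸ Ne.symm h₁₂ : x₂ ≠ x₃)]
    · linarith [one_le h₁₂, one_le h₁₃]

theorem stmt_10_general (a b : ℤ) (hb : b < 0) :
    (∀ x₁ x₂ x₃ : ℤ, ¬(x₁ = 0 ∧ x₂ = 0 ∧ x₃ = 0) →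
        (a ^ 2 - 2 * b) * (x₁ ^ 2 + x₂ ^ 2 + x₃ ^ 2) +
            2 * b * (x₁ * x₂ + x₁ * x₃ + x₂ * x₃) ≥ a ^ 2 - 2 * b) ↔
      a ^ 2 ≥ -b := by
  simp only [quadForm_eq_sq_add_sum_sq_sub]
  refine ⟨fun h ↦ by linarith [h 1 1 1 (by simp)], fun h x₁ x₂ x₃ hx ↦ ?_⟩
  have hN := Int.one_le_sum_sq_of_ne_zero hx
  have ha := sq_nonneg a
  by_cases hconst : x₁ = x₂ ∧ x₂ = x₃
  · obtain ⟨rfl, rfl⟩ := hconst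
    have hN₃ : 3 ≤ x₁ ^ 2 + x₁ ^ 2 + x₁ ^ 2 := by
      linarith [Int.one_le_sq_of_ne_zero (by simpa using hx : x₁ ≠ 0)]
    simp only [sub_self]
    nlinarith
  · have hD := Int.two_le_sum_sq_sub_of_not_all_eq hconst
    nlinarith

theorem stmt_10 (a b : ℤ) (ha : a ≠ 0) (hb : b < 0) :
    (∀ x₁ x₂ x₃ : ℤ, ¬(x₁ = 0 ∧ x₂ = 0 ∧ x₃ = 0) →
        (a ^ 2 - 2 * b) * (x₁ ^ 2 + x₂ ^ 2 + x₃ ^ 2) +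
            2 * b * (x₁ * x₂ + x₁ * x₃ + x₂ * x₃) ≥ a ^ 2 - 2 * b) ↔
      a ^ 2 ≥ -b :=
  stmt_10_general a b hb
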